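/- arXiv:0904.0125 — 5 statements merged into one kernel-verified Lean document; each statement's English description precedes it below -/
import Mathlib

section
/- A finitely branching directed graph is locally finite (i.e., for all vertices s and t, the set of directed paths from s to t is finite) if and only if it contains no quasicycle. -/
/-!
A quasicycle `c₀ → c₁ → ⋯` with paths `cᵢ ⇝ t` yields paths `c₀ ⇝ t` of arbitrarily large
length, so infinitely many. Conversely, call an edge good if there are infinitely many paths from
its target to `t`. When there are infinitely many paths `v ⇝ t`, finite branching at `v` gives a
good edge out of `v` (König's argument); iterating from `s` produces an infinite chain of good
edges, each of which reaches `t`.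
-/

/-- `IsPath src tgt p s t` : the list of edges `p` forms a directed path from `s` to `t`
in the directed multigraph with edge-endpoint maps `src`, `tgt`. -/
def IsPath {V E : Type*} (src tgt : E → V) : List E → V → V → Prop
  | [], s, t => s = t
  | e :: p, s, t => src e = s ∧ IsPath src tgt p (tgt e) t

/-- Finitely branching: every vertex has finitely many outgoing edges. -/
def FinitelyBranching {V E : Type*} (src : E → V) : Prop :=
  ∀ v : V, {e : E | src e = v}.Finite

/-- Locally finite: for all vertices s, t the set of directed paths from s to t is finite. -/
def GraphLocallyFinite {V E : Type*} (src tgt : E → V) : Prop :=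
  ∀ s t : V, {p : List E | IsPath src tgt p s t}.Finite

/-- A quasicycle: an infinite chain of composable edges `c 0 → c 1 → ⋯` together with a
vertex `t` such that there is a directed path from the source of each `c i` to `t`. -/
def Quasicycle {V E : Type*} (src tgt : E → V) : Prop :=
  ∃ (c : ℕ → E) (t : V), (∀ i, tgt (c i) = src (c (i + 1))) ∧
    ∀ i, ∃ p, IsPath src tgt p (src (c i)) t

theorem exists_seq_of_forall_exists {α : Type*} {S : Set α} {r : α → α → Prop}
    (h : ∀ a ∈ S, ∃ b ∈ S, r a b) {a : α} (ha : a ∈ S) :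
    ∃ f : ℕ → α, f 0 = a ∧ (∀ n, f n ∈ S) ∧ ∀ n, r (f n) (f (n + 1)) := by
  choose g hgS hgr using h
  let f : ℕ → S := fun n => Nat.rec ⟨a, ha⟩ (fun _ x => ⟨g x x.2, hgS x x.2⟩) n
  exact ⟨fun n => (f n).1, rfl, fun n => (f n).2, fun n => hgr (f n).1 (f n).2⟩

section IsPath

variable {V E : Type*} {src tgt : E → V}

theorem IsPath.append {p q : List E} {s m t : V} (hp : IsPath src tgt p s m)
    (hq : IsPath src tgt q m t) : IsPath src tgt (p ++ q) s t := by
  induction p generalizing s with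
  | nil => cases hp; exact hq
  | cons e p ih => exact ⟨hp.1, ih hp.2⟩

theorem isPath_map_range {c : ℕ → E} (hc : ∀ i, tgt (c i) = src (c (i + 1))) (n : ℕ) :
    IsPath src tgt ((List.range n).map c) (src (c 0)) (src (c n)) := by
  induction n with
  | zero => rfl
  | succ n ih =>
    rw [List.range_succ, List.map_append]
    exact ih.append ⟨rfl, hc n⟩

theorem setOf_isPath_subset (v t : V) :
    {p | IsPath src tgt p v t} ⊆
      insert [] (⋃ e ∈ {e | src e = v}, List.cons e '' {p | IsPath src tgt p (tgt e) t}) := by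
  rintro (_ | ⟨e, q⟩) hp
  · exact Set.mem_insert _ _
  · exact Set.mem_insert_of_mem _ (Set.mem_biUnion hp.1 ⟨q, hp.2, rfl⟩)

theorem exists_edge_infinite_setOf_isPath {v t : V} (hv : {e | src e = v}.Finite)
    (h : {p | IsPath src tgt p v t}.Infinite) :
    ∃ e, src e = v ∧ {p | IsPath src tgt p (tgt e) t}.Infinite := by
  by_contra! hfin
  exact h <| ((hv.biUnion fun e he => (hfin e he).image _).insert []).subset
    (setOf_isPath_subset v t)

end IsPath

theorem GraphLocallyFinite.not_quasicycle {V E : Type*} {src tgt : E → V}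
    (hlf : GraphLocallyFinite src tgt) : ¬ Quasicycle src tgt := by
  rintro ⟨c, t, hc, hreach⟩
  obtain ⟨n, hn⟩ := ((hlf (src (c 0)) t).image List.length).bddAbove
  obtain ⟨p, hp⟩ := hreach (n + 1)
  have hlen := hn ⟨_, (isPath_map_range hc (n + 1)).append hp, rfl⟩
  simp only [List.length_append, List.length_map, List.length_range] at hlen
  omega

theorem quasicycle_of_infinite_setOf_isPath {V E : Type*} {src tgt : E → V}
    (hfb : FinitelyBranching src) {s t : V} (h : {p | IsPath src tgt p s t}.Infinite) :
    Quasicycle src tgt := by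
  let good : Set E := {e | {p | IsPath src tgt p (tgt e) t}.Infinite}
  have hnext : ∀ e ∈ good, ∃ e' ∈ good, tgt e = src e' := fun e he => by
    obtain ⟨e', he', hgood⟩ := exists_edge_infinite_setOf_isPath (hfb _) he
    exact ⟨e', hgood, he'.symm⟩
  obtain ⟨e₀, -, he₀⟩ := exists_edge_infinite_setOf_isPath (hfb s) h
  obtain ⟨c, -, hgood, hc⟩ := exists_seq_of_forall_exists hnext he₀
  refine ⟨c, t, hc, fun i => ?_⟩
  obtain ⟨p, hp⟩ := (hgood i).nonempty
  exact ⟨c i :: p, rfl, hp⟩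

/-- a finitely branching directed graph is locally finite iff it contains
no quasicycle. -/
theorem stmt_0 {V E : Type*} (src tgt : E → V) (hfb : FinitelyBranching src) :
    GraphLocallyFinite src tgt ↔ ¬ Quasicycle src tgt :=
  ⟨GraphLocallyFinite.not_quasicycle, fun hq _ _ =>
    Set.not_infinite.mp fun h => hq (quasicycle_of_infinite_setOf_isPath hfb h)⟩
end

section
/- Any two finite n-ary trees have a minimal common expansion: there exists a common expansion S of T₁ and T₂ such that every common expansion S' of T₁ and T₂ is an expansion of S. -/
/-!
Expansion coincides with the prefix order on trees: `T` expands to `S` exactly when `S` is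
obtained from `T` by grafting trees onto leaves of `T`. In that order any two trees have a least
upper bound, their overlay `join T₁ T₂`, which is therefore the minimal common expansion.
-/

/-- n-ary trees: a single vertex (leaf) is a tree, and attaching n trees as the
children of a new root yields a tree. -/
inductive NTree (n : ℕ) : Type
  | leaf : NTree n
  | node (f : Fin n → NTree n) : NTree n

/-- Simple expansion: replace one leaf by a node with n leaf children. -/
inductive SimpleExp {n : ℕ} : NTree n → NTree n → Prop
  | root : SimpleExp .leaf (.node fun _ => .leaf)
  | child {f g : Fin n → NTree n} (i : Fin n) :
      SimpleExp (f i) (g i) → (∀ j, j ≠ i → f j = g j) →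
      SimpleExp (.node f) (.node g)

/-- Expansion: the result of finitely many successive simple expansions. -/
def Expansion {n : ℕ} : NTree n → NTree n → Prop := Relation.ReflTransGen SimpleExp

namespace NTree

variable {n : ℕ}

inductive IsPrefix : NTree n → NTree n → Prop
  | leaf (T : NTree n) : IsPrefix .leaf T
  | node {f g : Fin n → NTree n} : (∀ i, IsPrefix (f i) (g i)) → IsPrefix (.node f) (.node g)

theorem IsPrefix.refl : ∀ T : NTree n, IsPrefix T T
  | .leaf => .leaf _
  | .node f => .node fun i => IsPrefix.refl (f i)

theorem IsPrefix.trans {A B C : NTree n} (hAB : IsPrefix A B) (hBC : IsPrefix B C) :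
    IsPrefix A C := by
  induction hAB generalizing C with
  | leaf => exact .leaf _
  | node _ ih =>
    cases hBC with
    | node hBC => exact .node fun i => ih i (hBC i)

def join : NTree n → NTree n → NTree n
  | .leaf, T => T
  | .node f, .leaf => .node f
  | .node f, .node g => .node fun i => join (f i) (g i)

theorem isPrefix_join_left : ∀ A B : NTree n, IsPrefix A (join A B)
  | .leaf, _ => .leaf _
  | .node _, .leaf => IsPrefix.refl _
  | .node f, .node g => .node fun i => isPrefix_join_left (f i) (g i)

theorem isPrefix_join_right : ∀ A B : NTree n, IsPrefix B (join A B)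
  | .leaf, B => IsPrefix.refl B
  | .node _, .leaf => .leaf _
  | .node f, .node g => .node fun i => isPrefix_join_right (f i) (g i)

theorem join_isPrefix : ∀ {A B C : NTree n}, IsPrefix A C → IsPrefix B C → IsPrefix (join A B) C
  | .leaf, _, _, _, hB => hB
  | .node _, .leaf, _, hA, _ => hA
  | .node _, .node _, .node _, .node hA, .node hB => .node fun i => join_isPrefix (hA i) (hB i)
  | .node _, .node _, .leaf, hA, _ => nomatch hA

end NTree

open NTree

variable {n : ℕ}

theorem SimpleExp.isPrefix {A B : NTree n} (h : SimpleExp A B) : IsPrefix A B := by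
  induction h with
  | root => exact .leaf _
  | @child f g i _ hrest ih =>
    refine .node fun j => ?_
    by_cases hji : j = i
    · exact hji ▸ ih
    · exact hrest j hji ▸ IsPrefix.refl _

namespace Expansion

theorem isPrefix {A B : NTree n} (h : Expansion A B) : IsPrefix A B := by
  induction h with
  | refl => exact IsPrefix.refl _
  | tail _ hs ih => exact ih.trans hs.isPrefix

theorem node_update {a b : NTree n} (f : Fin n → NTree n) (i : Fin n) (h : Expansion a b) :
    Expansion (.node (Function.update f i a)) (.node (Function.update f i b)) := by
  induction h with
  | refl => exact .refl
  | tail _ hs ih =>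
    refine ih.tail (SimpleExp.child i (by simpa using hs) fun j hj => ?_)
    simp [Function.update_of_ne hj]

theorem node_piecewise {f g : Fin n → NTree n} (h : ∀ i, Expansion (f i) (g i))
    (s : Finset (Fin n)) : Expansion (.node f) (.node (s.piecewise g f)) := by
  induction s using Finset.induction with
  | empty => simpa using .refl
  | @insert i s hi ih =>
    have step := node_update (s.piecewise g f) i (h i)
    rw [← s.piecewise_eq_of_notMem g f hi, Function.update_eq_self] at step
    rw [Finset.piecewise_insert]
    exact ih.trans step

theorem node {f g : Fin n → NTree n} (h : ∀ i, Expansion (f i) (g i)) :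
    Expansion (.node f) (.node g) := by
  simpa using node_piecewise h Finset.univ

theorem leaf : ∀ T : NTree n, Expansion .leaf T
  | .leaf => .refl
  | .node f => .head SimpleExp.root (node fun i => leaf (f i))

end Expansion

theorem NTree.IsPrefix.expansion {A B : NTree n} (h : IsPrefix A B) : Expansion A B := by
  induction h with
  | leaf T => exact Expansion.leaf T
  | node _ ih => exact Expansion.node ih

theorem expansion_iff_isPrefix {A B : NTree n} : Expansion A B ↔ IsPrefix A B :=
  ⟨Expansion.isPrefix, IsPrefix.expansion⟩

theorem stmt_6_general {n : ℕ} (T₁ T₂ : NTree n) :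
    ∃ S : NTree n, Expansion T₁ S ∧ Expansion T₂ S ∧
      ∀ S' : NTree n, Expansion T₁ S' → Expansion T₂ S' → Expansion S S' := by
  simp only [expansion_iff_isPrefix]
  exact ⟨join T₁ T₂, isPrefix_join_left T₁ T₂, isPrefix_join_right T₁ T₂,
    fun _ h₁ h₂ => join_isPrefix h₁ h₂⟩

/-- any two finite n-ary trees have a minimal common expansion. -/
theorem stmt_6 {n : ℕ} (hn : 2 ≤ n) (T₁ T₂ : NTree n) :
    ∃ S : NTree n, Expansion T₁ S ∧ Expansion T₂ S ∧
      ∀ S' : NTree n, Expansion T₁ S' → Expansion T₂ S' → Expansion S S' :=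
  stmt_6_general T₁ T₂
end

section
/- For the Catalan rewriting system (rules α_i as above), each rewrite step α_i applied at the root decreases the rank function R by exactly (n−1)·L(uₙ), where uₙ is the last argument of the inner ⊗-term being restructured; in particular R strictly decreases. -/
/-- Terms of the free algebra over variable set `V` with one n-ary operation ⊗. -/
inductive CTerm (n : ℕ) (V : Type*) : Type _
  | var (v : V) : CTerm n V
  | op (f : Fin n → CTerm n V) : CTerm n V

/-- `brk i x` is the term ⊗(x₀,…,x_{i-1}, ⊗(x_i,…,x_{i+n-1}), x_{i+n},…,x_{2n-2}):
the n-ary tensor of the entries of `x` with one inner ⊗ placed at (0-based) position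
`i`.  The Catalan rule α_i rewrites `brk i x` to `brk (i-1) x` for `0 < i < n`. -/
def brk {n : ℕ} {V : Type*} (i : ℕ) (x : ℕ → CTerm n V) : CTerm n V :=
  .op fun j => if (j : ℕ) < i then x (j : ℕ)
    else if (j : ℕ) = i then .op (fun k : Fin n => x (i + (k : ℕ)))
    else x ((j : ℕ) + n - 1)

/-- One rewrite step of the Catalan rewriting system: a rule
α_i : ⊗(x₁,…,x_i, ⊗(x_{i+1},…,x_{i+n}), x_{i+n+1},…,x_{2n-1}) →
⊗(x₁,…,x_{i-1}, ⊗(x_i,…,x_{i+n-1}), x_{i+n},…,x_{2n-1}) (for 0 < i < n) applied at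
some subterm position, with arbitrary terms substituted for the variables. -/
inductive CStep {n : ℕ} {V : Type*} : CTerm n V → CTerm n V → Prop
  | rule (i : ℕ) (h1 : 0 < i) (h2 : i < n) (x : ℕ → CTerm n V) :
      CStep (brk i x) (brk (i - 1) x)
  | congr {f g : Fin n → CTerm n V} (i : Fin n) :
      CStep (f i) (g i) → (∀ j, j ≠ i → f j = g j) → CStep (.op f) (.op g)

/-- The length (number of variable occurrences) of a term. -/
def lenL {n : ℕ} {V : Type*} : CTerm n V → ℕ
  | .var _ => 1
  | .op f => ∑ i : Fin n, lenL (f i)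

/-- The Catalan rank: R(v) = 0 for variables and
R(⊗(t₁,…,tₙ)) = Σᵢ R(tᵢ) + Σ_{i=2}^{n}(i−1)·L(tᵢ) − n(n−1)/2. -/
def rankR {n : ℕ} {V : Type*} : CTerm n V → ℤ
  | .var _ => 0
  | .op f => ∑ i : Fin n, rankR (f i) +
      ∑ i : Fin n, ((i : ℕ) : ℤ) * (lenL (f i) : ℤ) - ((n * (n - 1) / 2 : ℕ) : ℤ)

lemma split_sum {M : Type*} [AddCommMonoid M] {n i : ℕ} (h : i < n) (g : ℕ → M) :
    ∑ j ∈ Finset.range n, g j =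
      (∑ j ∈ Finset.range i, g j + g i) + ∑ j ∈ Finset.Ico (i+1) n, g j := by
  rw [Finset.range_eq_Ico, ← Finset.sum_Ico_consecutive _ (Nat.zero_le (i+1)) h,
      ← Finset.range_eq_Ico, Finset.sum_range_succ]

lemma rank_brk {n : ℕ} {V : Type*} (p : ℕ) (hp : p < n) (x : ℕ → CTerm n V) :
    rankR (brk p x) =
      ((∑ j ∈ Finset.range p, rankR (x j)
        + (∑ k ∈ Finset.range n, rankR (x (p+k))
           + ∑ k ∈ Finset.range n, (k:ℤ) * (lenL (x (p+k)) : ℤ)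
           - ((n*(n-1)/2 : ℕ) : ℤ)))
       + ∑ j ∈ Finset.Ico (p+1) n, rankR (x (j+n-1)))
      + ((∑ j ∈ Finset.range p, (j:ℤ)*(lenL (x j):ℤ)
         + (p:ℤ) * ∑ k ∈ Finset.range n, (lenL (x (p+k)) : ℤ))
         + ∑ j ∈ Finset.Ico (p+1) n, (j:ℤ)*(lenL (x (j+n-1)):ℤ))
      - ((n*(n-1)/2 : ℕ) : ℤ) := by
  rw [brk, rankR]
  congr 1
  · congr 1
    · rw [Fin.sum_univ_eq_sum_range (fun j => rankR (if j < p then x j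
        else if j = p then CTerm.op (fun k : Fin n => x (p + (k:ℕ))) else x (j + n - 1)))]
      rw [split_sum hp]
      congr 1
      · congr 1
        · exact Finset.sum_congr rfl fun j hj => by
            rw [if_pos (Finset.mem_range.mp hj)]
        · rw [if_neg (lt_irrefl p), if_pos rfl, rankR]
          congr 1
          · congr 1
            · exact Fin.sum_univ_eq_sum_range (fun k => rankR (x (p + k))) n
            · exact Fin.sum_univ_eq_sum_range (fun k => (k:ℤ) * (lenL (x (p + k)) : ℤ)) n
      · exact Finset.sum_congr rfl fun j hj => by
          obtain ⟨h1, _⟩ := Finset.mem_Ico.mp hj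
          rw [if_neg (by omega), if_neg (by omega)]
    · rw [Fin.sum_univ_eq_sum_range (fun j => (j:ℤ) * (lenL (if j < p then x j
        else if j = p then CTerm.op (fun k : Fin n => x (p + (k:ℕ))) else x (j + n - 1)) : ℤ))]
      rw [split_sum hp]
      congr 1
      · congr 1
        · exact Finset.sum_congr rfl fun j hj => by
            rw [if_pos (Finset.mem_range.mp hj)]
        · rw [if_neg (lt_irrefl p), if_pos rfl, lenL]
          push_cast
          rw [Fin.sum_univ_eq_sum_range (fun k => ((lenL (x (p + k)) : ℤ)))]
      · exact Finset.sum_congr rfl fun j hj => by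
          obtain ⟨h1, _⟩ := Finset.mem_Ico.mp hj
          rw [if_neg (by omega), if_neg (by omega)]

/-- a root application of the rule α_i decreases the rank R by exactly
(n−1)·L(uₙ), where uₙ = x_{i+n-1} is the last argument of the inner ⊗-term being
restructured; in particular R strictly decreases. -/
theorem stmt_10 {n : ℕ} (hn : 2 ≤ n) {V : Type*} (i : ℕ) (h1 : 0 < i) (h2 : i < n)
    (x : ℕ → CTerm n V) :
    rankR (brk i x) - rankR (brk (i - 1) x) = ((n : ℤ) - 1) * (lenL (x (i + n - 1)) : ℤ) ∧
    rankR (brk (i - 1) x) < rankR (brk i x) := by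
  obtain ⟨j, rfl⟩ : ∃ j, i = j + 1 := ⟨i - 1, by omega⟩
  obtain ⟨m, rfl⟩ : ∃ m, n = m + 1 := ⟨n - 1, by omega⟩
  have key : rankR (brk (j+1) x) - rankR (brk (j+1-1) x)
      = (((m+1 : ℕ) : ℤ) - 1) * (lenL (x (j+1+(m+1)-1)) : ℤ) := by
    have hidx : j + 1 - 1 = j := by omega
    rw [hidx, rank_brk (j+1) h2 x, rank_brk j (by omega) x]
    simp only [show ∀ a : ℕ, a + (m+1) - 1 = a + m from fun a => by omega]
    have e2 : ∑ k ∈ Finset.range (m+1), rankR (x (j+1+k))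
        = ∑ k ∈ Finset.range m, rankR (x (j+1+k)) + rankR (x (j+1+m)) :=
      Finset.sum_range_succ _ _
    have e3 : ∑ k ∈ Finset.range (m+1), rankR (x (j+k))
        = ∑ k ∈ Finset.range m, rankR (x (j+1+k)) + rankR (x j) := by
      rw [Finset.sum_range_succ']
      congr 1
      exact Finset.sum_congr rfl fun k _ => by rw [show j + (k+1) = j+1+k from by omega]
    have e1 : ∑ j' ∈ Finset.range (j+1), rankR (x j')
        = ∑ j' ∈ Finset.range j, rankR (x j') + rankR (x j) := Finset.sum_range_succ _ _
    have e4 : ∑ j' ∈ Finset.Ico (j+1) (m+1), rankR (x (j'+m))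
        = rankR (x (j+1+m)) + ∑ j' ∈ Finset.Ico (j+1+1) (m+1), rankR (x (j'+m)) := by
      rw [Finset.sum_eq_sum_Ico_succ_bot h2]
    have f1 : ∑ j' ∈ Finset.range (j+1), (j':ℤ) * (lenL (x j') : ℤ)
        = ∑ j' ∈ Finset.range j, (j':ℤ) * (lenL (x j') : ℤ) + (j:ℤ) * (lenL (x j) : ℤ) :=
      Finset.sum_range_succ _ _
    have f2 : ∑ k ∈ Finset.range (m+1), (k:ℤ) * (lenL (x (j+1+k)) : ℤ)
        = ∑ k ∈ Finset.range m, (k:ℤ) * (lenL (x (j+1+k)) : ℤ)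
          + (m:ℤ) * (lenL (x (j+1+m)) : ℤ) := Finset.sum_range_succ _ _
    have f3 : ∑ k ∈ Finset.range (m+1), (k:ℤ) * (lenL (x (j+k)) : ℤ)
        = ∑ k ∈ Finset.range m, (k:ℤ) * (lenL (x (j+1+k)) : ℤ)
          + ∑ k ∈ Finset.range m, (lenL (x (j+1+k)) : ℤ) := by
      rw [Finset.sum_range_succ', ← Finset.sum_add_distrib]
      simp only [Nat.cast_zero, zero_mul, add_zero]
      exact Finset.sum_congr rfl fun k _ => by
        rw [show j + (k+1) = j+1+k from by omega]; push_cast; ring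
    have f4 : ∑ k ∈ Finset.range (m+1), (lenL (x (j+1+k)) : ℤ)
        = ∑ k ∈ Finset.range m, (lenL (x (j+1+k)) : ℤ) + (lenL (x (j+1+m)) : ℤ) :=
      Finset.sum_range_succ _ _
    have f5 : ∑ k ∈ Finset.range (m+1), (lenL (x (j+k)) : ℤ)
        = ∑ k ∈ Finset.range m, (lenL (x (j+1+k)) : ℤ) + (lenL (x j) : ℤ) := by
      rw [Finset.sum_range_succ']
      congr 1
      exact Finset.sum_congr rfl fun k _ => by rw [show j + (k+1) = j+1+k from by omega]
    have g1 : ∑ j' ∈ Finset.Ico (j+1) (m+1), (j':ℤ) * (lenL (x (j'+m)) : ℤ)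
        = ((j:ℤ)+1) * (lenL (x (j+1+m)) : ℤ)
          + ∑ j' ∈ Finset.Ico (j+1+1) (m+1), (j':ℤ) * (lenL (x (j'+m)) : ℤ) := by
      rw [Finset.sum_eq_sum_Ico_succ_bot h2]
      push_cast
      ring
    rw [e1, e2, e3, e4, f1, f2, f3, f4, f5, g1]
    push_cast
    ring
  refine ⟨key, ?_⟩
  have hl : 0 < (lenL (x (j+1+(m+1)-1)) : ℤ) := by
    have : ∀ t : CTerm (m+1) V, 0 < lenL t := by
      intro t
      induction t with
      | var v => simp [lenL]
      | op f ih =>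
        rw [lenL]
        have hle := Finset.single_le_sum (f := fun i : Fin (m+1) => lenL (f i))
          (fun i _ => Nat.zero_le _) (Finset.mem_univ (⟨0, Nat.succ_pos m⟩ : Fin (m+1)))
        exact lt_of_lt_of_le (ih _) hle
    exact_mod_cast this _
  have hm : (1:ℤ) ≤ ((m+1 : ℕ) : ℤ) - 1 := by push_cast; omega
  have := mul_pos (lt_of_lt_of_le zero_lt_one hm) hl
  linarith [key, this]
end

section
/- In the free algebra on variable set V with one n-ary operation ⊗, a term t satisfies R(t) = 0 if and only if t is equal to its left-most bracketing, where R is the Catalan rank function. -/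
/-- A term is (equal to) its left-most bracketing iff every occurrence of ⊗ is nested
in the first argument only: all arguments other than the first are variables. -/
def IsLmb {n : ℕ} {V : Type*} : CTerm n V → Prop
  | .var _ => True
  | .op f => (∀ i : Fin n, (i : ℕ) = 0 → IsLmb (f i)) ∧
      (∀ i : Fin n, (i : ℕ) ≠ 0 → ∃ v, f i = .var v)


lemma lenL_pos {n : ℕ} {V : Type*} (hn : 1 ≤ n) (t : CTerm n V) : 1 ≤ lenL t := by
  induction t with
  | var v => simp [lenL]
  | op f ih =>
    simp only [lenL]
    calc 1 ≤ n := hn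
    _ = ∑ _i : Fin n, 1 := by simp
    _ ≤ ∑ i : Fin n, lenL (f i) := Finset.sum_le_sum fun i _ => ih i

lemma sum_fin_id' (n : ℕ) : (∑ i : Fin n, ((i : ℕ) : ℤ)) = ((n * (n - 1) / 2 : ℕ) : ℤ) := by
  rw [← Nat.cast_sum]
  congr 1
  exact (Fin.sum_univ_eq_sum_range (fun i => i) n).trans (Finset.sum_range_id n)

lemma rankR_op_eq {n : ℕ} {V : Type*} (f : Fin n → CTerm n V) :
    rankR (.op f) = ∑ i : Fin n, rankR (f i) +
      ∑ i : Fin n, ((i : ℕ) : ℤ) * ((lenL (f i) : ℤ) - 1) := by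
  have : ∑ i : Fin n, ((i : ℕ) : ℤ) * ((lenL (f i) : ℤ) - 1)
      = ∑ i : Fin n, ((i : ℕ) : ℤ) * (lenL (f i) : ℤ) - ∑ i : Fin n, ((i : ℕ) : ℤ) := by
    rw [← Finset.sum_sub_distrib]
    congr 1; ext i; ring
  rw [this, sum_fin_id', rankR]
  ring

lemma rankR_nonneg {n : ℕ} {V : Type*} (hn : 1 ≤ n) (t : CTerm n V) : 0 ≤ rankR t := by
  induction t with
  | var v => simp [rankR]
  | op f ih =>
    rw [rankR_op_eq]
    have h1 : 0 ≤ ∑ i : Fin n, rankR (f i) := Finset.sum_nonneg fun i _ => ih i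
    have h2 : 0 ≤ ∑ i : Fin n, ((i : ℕ) : ℤ) * ((lenL (f i) : ℤ) - 1) := by
      apply Finset.sum_nonneg
      intro i _
      have := lenL_pos hn (f i)
      have h1' : (1 : ℤ) ≤ (lenL (f i) : ℤ) := by exact_mod_cast this
      exact mul_nonneg (by positivity) (by linarith)
    linarith

lemma lenL_eq_one {n : ℕ} {V : Type*} (hn : 2 ≤ n) {t : CTerm n V} (h : lenL t = 1) :
    ∃ v, t = .var v := by
  cases t with
  | var v => exact ⟨v, rfl⟩
  | op f =>
    exfalso
    have : 2 ≤ lenL (CTerm.op f) := by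
      simp only [lenL]
      calc 2 ≤ n := hn
      _ = ∑ _i : Fin n, 1 := by simp
      _ ≤ ∑ i : Fin n, lenL (f i) := Finset.sum_le_sum fun i _ => lenL_pos (by omega) (f i)
    omega

/-- a term `t` satisfies R(t) = 0 if and only if `t` is equal to its
left-most bracketing. -/
theorem stmt_11 {n : ℕ} (hn : 2 ≤ n) {V : Type*} (t : CTerm n V) :
    rankR t = 0 ↔ IsLmb t := by
  have hn1 : 1 ≤ n := by omega
  induction t with
  | var v => simp [rankR, IsLmb]
  | op f ih =>
    rw [rankR_op_eq]
    have h1 : 0 ≤ ∑ i : Fin n, rankR (f i) :=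
      Finset.sum_nonneg fun i _ => rankR_nonneg hn1 (f i)
    have hterm : ∀ i : Fin n, 0 ≤ ((i : ℕ) : ℤ) * ((lenL (f i) : ℤ) - 1) := by
      intro i
      have h1' : (1 : ℤ) ≤ (lenL (f i) : ℤ) := by exact_mod_cast lenL_pos hn1 (f i)
      exact mul_nonneg (by positivity) (by linarith)
    have h2 : 0 ≤ ∑ i : Fin n, ((i : ℕ) : ℤ) * ((lenL (f i) : ℤ) - 1) :=
      Finset.sum_nonneg fun i _ => hterm i
    constructor
    · intro h0
      have hs1 : ∑ i : Fin n, rankR (f i) = 0 := by linarith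
      have hs2 : ∑ i : Fin n, ((i : ℕ) : ℤ) * ((lenL (f i) : ℤ) - 1) = 0 := by linarith
      rw [Finset.sum_eq_zero_iff_of_nonneg
        (fun i _ => rankR_nonneg hn1 (f i))] at hs1
      rw [Finset.sum_eq_zero_iff_of_nonneg (fun i _ => hterm i)] at hs2
      constructor
      · intro i _
        exact (ih i).mp (hs1 i (Finset.mem_univ i))
      · intro i hi
        have := hs2 i (Finset.mem_univ i)
        have hiz : ((i : ℕ) : ℤ) ≠ 0 := by exact_mod_cast hi
        have hlen : (lenL (f i) : ℤ) - 1 = 0 := by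
          rcases mul_eq_zero.mp this with h | h
          · exact absurd h hiz
          · exact h
        have : lenL (f i) = 1 := by omega
        exact lenL_eq_one hn this
    · rintro ⟨hl, hv⟩
      have hrank0 : ∀ i : Fin n, rankR (f i) = 0 := by
        intro i
        by_cases hi : (i : ℕ) = 0
        · exact (ih i).mpr (hl i hi)
        · obtain ⟨v, hv'⟩ := hv i hi
          rw [hv']; rfl
      have hlen1 : ∀ i : Fin n, (i : ℕ) ≠ 0 → lenL (f i) = 1 := by
        intro i hi
        obtain ⟨v, hv'⟩ := hv i hi
        rw [hv']; rfl
      have hs1 : ∑ i : Fin n, rankR (f i) = 0 :=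
        Finset.sum_eq_zero fun i _ => hrank0 i
      have hs2 : ∑ i : Fin n, ((i : ℕ) : ℤ) * ((lenL (f i) : ℤ) - 1) = 0 := by
        apply Finset.sum_eq_zero
        intro i _
        by_cases hi : (i : ℕ) = 0
        · simp [hi]
        · rw [hlen1 i hi]; ring
      rw [hs1, hs2, add_zero]
end

section
/- In an n-fold monoidal category (n ≥ 2), the span of derived maps ι^{in}_{a,b} : a ⊗_i b → a ⊗_n b and τ^{in}_{a,b} : a ⊗_i b → b ⊗_n a witnesses non-confluence: in the free n-fold monoidal category on a discrete category with at least two distinct objects a, b, there is no object c admitting reductions a ⊗_n b → c and b ⊗_n a → c. Consequently the rewriting theory of n-fold monoidal categories is not confluent. -/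
/-- Object terms of the free n-fold monoidal category on a discrete category whose
objects are the elements of `V`: variables, the common unit I, and n tensor products. -/
inductive ITerm (n : ℕ) (V : Type*) : Type _
  | var (v : V) : ITerm n V
  | unit : ITerm n V
  | ten (i : Fin n) (a b : ITerm n V) : ITerm n V

/-- The equational theory on terms: each ⊗ᵢ is strictly associative with strict
(two-sided) unit I, the same unit for all i. -/
inductive TEq {n : ℕ} {V : Type*} : ITerm n V → ITerm n V → Prop
  | assoc (i : Fin n) (a b c : ITerm n V) :
      TEq (.ten i a (.ten i b c)) (.ten i (.ten i a b) c)
  | unit_right (i : Fin n) (a : ITerm n V) : TEq (.ten i a .unit) a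
  | unit_left (i : Fin n) (a : ITerm n V) : TEq (.ten i .unit a) a
  | refl (a : ITerm n V) : TEq a a
  | symm {a b : ITerm n V} : TEq a b → TEq b a
  | trans {a b c : ITerm n V} : TEq a b → TEq b c → TEq a c
  | congr (i : Fin n) {a a' b b' : ITerm n V} :
      TEq a a' → TEq b b' → TEq (.ten i a b) (.ten i a' b')

/-- Reductions of the free n-fold monoidal category: generated by the interchange maps
η^{ij} : (a ⊗ⱼ b) ⊗ᵢ (c ⊗ⱼ d) → (a ⊗ᵢ c) ⊗ⱼ (b ⊗ᵢ d) for i < j, closed under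
identities (along equal objects), composition and the functoriality of each ⊗ᵢ. -/
inductive Red {n : ℕ} {V : Type*} : ITerm n V → ITerm n V → Prop
  | eta (i j : Fin n) (hij : i < j) (a b c d : ITerm n V) :
      Red (.ten i (.ten j a b) (.ten j c d)) (.ten j (.ten i a c) (.ten i b d))
  | ofEq {a b : ITerm n V} : TEq a b → Red a b
  | trans {a b c : ITerm n V} : Red a b → Red b c → Red a c
  | congr (i : Fin n) {a a' b b' : ITerm n V} :
      Red a a' → Red b b' → Red (.ten i a b) (.ten i a' b')

section
variable {n : ℕ} {V : Type*}

open Classical in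
noncomputable def cnt (v : V) : ITerm n V → ℕ
  | .var w => if v = w then 1 else 0
  | .unit => 0
  | .ten _ l r => cnt v l + cnt v r

noncomputable def sep (a b : V) : ITerm n V → Option (Fin n × Bool)
  | .var _ => none
  | .unit => none
  | .ten i l r =>
    if 0 < cnt a l ∧ 0 < cnt b r then some (i, true)
    else if 0 < cnt b l ∧ 0 < cnt a r then some (i, false)
    else (sep a b l).orElse fun _ => sep a b r

lemma sep_ten (a b : V) (i : Fin n) (l r : ITerm n V) :
    sep a b (.ten i l r) =
    if 0 < cnt a l ∧ 0 < cnt b r then some (i, true)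
    else if 0 < cnt b l ∧ 0 < cnt a r then some (i, false)
    else (sep a b l).orElse fun _ => sep a b r := rfl

lemma sep_none {a b : V} {t : ITerm n V} (h : cnt a t = 0 ∨ cnt b t = 0) :
    sep a b t = none := by
  induction t with
  | var v => rfl
  | unit => rfl
  | ten i l r ihl ihr =>
    simp only [cnt] at h
    rw [sep_ten, if_neg (by omega), if_neg (by omega),
      ihl (by omega), ihr (by omega)]
    rfl

lemma sep_ten_true {a b : V} {l r : ITerm n V} (i : Fin n)
    (h1 : 0 < cnt a l) (h2 : 0 < cnt b r) :
    sep a b (.ten i l r) = some (i, true) := by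
  rw [sep_ten, if_pos ⟨h1, h2⟩]

lemma sep_ten_false {a b : V} {l r : ITerm n V} (i : Fin n)
    (h1 : 0 < cnt b l) (h2 : 0 < cnt a r)
    (h3 : cnt a l = 0) :
    sep a b (.ten i l r) = some (i, false) := by
  rw [sep_ten, if_neg (by omega), if_pos ⟨h1, h2⟩]

lemma sep_ten_left {a b : V} {l r : ITerm n V} (i : Fin n)
    (h1 : cnt a r = 0) (h2 : cnt b r = 0) :
    sep a b (.ten i l r) = sep a b l := by
  rw [sep_ten, if_neg (by omega), if_neg (by omega), sep_none (Or.inl h1)]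
  cases sep a b l <;> rfl

lemma sep_ten_right {a b : V} {l r : ITerm n V} (i : Fin n)
    (h1 : cnt a l = 0) (h2 : cnt b l = 0) :
    sep a b (.ten i l r) = sep a b r := by
  rw [sep_ten, if_neg (by omega), if_neg (by omega), sep_none (Or.inl h1)]
  rfl

lemma cnt_teq {s t : ITerm n V} (h : TEq s t) (v : V) : cnt v s = cnt v t := by
  induction h <;> simp_all [cnt] <;> omega

lemma cnt_red {s t : ITerm n V} (h : Red s t) (v : V) : cnt v s = cnt v t := by
  induction h with
  | eta => simp only [cnt]; omega
  | ofEq h => exact cnt_teq h v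
  | trans _ _ ih1 ih2 => omega
  | congr i _ _ ih1 ih2 => simp only [cnt]; omega

end

section
variable {n : ℕ} {V : Type*}

lemma sep_teq {a b : V} {s t : ITerm n V} (h : TEq s t) :
    cnt a s = 1 → cnt b s = 1 → sep a b s = sep a b t := by
  induction h with
  | assoc i A B C =>
    intro ha hb
    simp only [cnt] at ha hb
    obtain ⟨h1, h2, h3⟩ | ⟨h1, h2, h3⟩ | ⟨h1, h2, h3⟩ :
        (cnt a A = 1 ∧ cnt a B = 0 ∧ cnt a C = 0) ∨
        (cnt a A = 0 ∧ cnt a B = 1 ∧ cnt a C = 0) ∨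
        (cnt a A = 0 ∧ cnt a B = 0 ∧ cnt a C = 1) := by omega
    all_goals
      obtain ⟨k1, k2, k3⟩ | ⟨k1, k2, k3⟩ | ⟨k1, k2, k3⟩ :
          (cnt b A = 1 ∧ cnt b B = 0 ∧ cnt b C = 0) ∨
          (cnt b A = 0 ∧ cnt b B = 1 ∧ cnt b C = 0) ∨
          (cnt b A = 0 ∧ cnt b B = 0 ∧ cnt b C = 1) := by omega
    all_goals
      simp (disch := first | omega | (simp only [cnt]; omega)) only
        [sep_ten_true, sep_ten_false, sep_ten_left, sep_ten_right]
  | unit_right i A => intro _ _; rw [sep_ten_left i (by simp [cnt]) (by simp [cnt])]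
  | unit_left i A => intro _ _; rw [sep_ten_right i (by simp [cnt]) (by simp [cnt])]
  | refl A => intro _ _; rfl
  | symm h ih =>
    intro ha hb
    exact (ih (by rw [cnt_teq h]; exact ha) (by rw [cnt_teq h]; exact hb)).symm
  | trans h1 h2 ih1 ih2 =>
    intro ha hb
    rw [ih1 ha hb, ih2 (by rw [← cnt_teq h1]; exact ha) (by rw [← cnt_teq h1]; exact hb)]
  | congr i hl hr ihl ihr =>
    rename_i l l' r r'
    intro ha hb
    simp only [cnt] at ha hb
    have el := cnt_teq hl
    have er := cnt_teq hr
    obtain ⟨h1, h2, h3, h4⟩ | ⟨h1, h2, h3, h4⟩ | ⟨h1, h2, h3, h4⟩ | ⟨h1, h2, h3, h4⟩ :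
        (cnt a l = 1 ∧ cnt a r = 0 ∧ cnt b l = 1 ∧ cnt b r = 0) ∨
        (cnt a l = 1 ∧ cnt a r = 0 ∧ cnt b l = 0 ∧ cnt b r = 1) ∨
        (cnt a l = 0 ∧ cnt a r = 1 ∧ cnt b l = 1 ∧ cnt b r = 0) ∨
        (cnt a l = 0 ∧ cnt a r = 1 ∧ cnt b l = 0 ∧ cnt b r = 1) := by omega
    · rw [sep_ten_left i h2 h4, sep_ten_left i (by rw [← er]; omega) (by rw [← er]; omega),
        ihl h1 h3]
    · rw [sep_ten_true i (by omega) (by omega),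
        sep_ten_true i (by rw [← el]; omega) (by rw [← er]; omega)]
    · rw [sep_ten_false i (by omega) (by omega) (by omega),
        sep_ten_false i (by rw [← el]; omega) (by rw [← er]; omega) (by rw [← el]; omega)]
    · rw [sep_ten_right i h1 h3, sep_ten_right i (by rw [← el]; omega) (by rw [← el]; omega),
        ihr h2 h4]

end
section
variable {n : ℕ} {V : Type*}

lemma sep_red {a b : V} {s t : ITerm n V} (h : Red s t) :
    ∀ p : Fin n × Bool, cnt a s = 1 → cnt b s = 1 → sep a b s = some p →
      ∃ q, sep a b t = some q ∧ ((p.1 : ℕ) < (q.1 : ℕ) ∨ p = q) := by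
  induction h with
  | eta i j hij x y z w =>
    intro p ha hb hp
    simp only [cnt] at ha hb
    obtain ⟨h1, h2, h3, h4⟩ | ⟨h1, h2, h3, h4⟩ | ⟨h1, h2, h3, h4⟩ | ⟨h1, h2, h3, h4⟩ :
        (cnt a x = 1 ∧ cnt a y = 0 ∧ cnt a z = 0 ∧ cnt a w = 0) ∨
        (cnt a x = 0 ∧ cnt a y = 1 ∧ cnt a z = 0 ∧ cnt a w = 0) ∨
        (cnt a x = 0 ∧ cnt a y = 0 ∧ cnt a z = 1 ∧ cnt a w = 0) ∨
        (cnt a x = 0 ∧ cnt a y = 0 ∧ cnt a z = 0 ∧ cnt a w = 1) := by omega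
    all_goals
      obtain ⟨k1, k2, k3, k4⟩ | ⟨k1, k2, k3, k4⟩ | ⟨k1, k2, k3, k4⟩ | ⟨k1, k2, k3, k4⟩ :
          (cnt b x = 1 ∧ cnt b y = 0 ∧ cnt b z = 0 ∧ cnt b w = 0) ∨
          (cnt b x = 0 ∧ cnt b y = 1 ∧ cnt b z = 0 ∧ cnt b w = 0) ∨
          (cnt b x = 0 ∧ cnt b y = 0 ∧ cnt b z = 1 ∧ cnt b w = 0) ∨
          (cnt b x = 0 ∧ cnt b y = 0 ∧ cnt b z = 0 ∧ cnt b w = 1) := by omega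
    all_goals
      simp (disch := first | omega | (simp only [cnt]; omega)) only
        [sep_ten_true, sep_ten_false, sep_ten_left, sep_ten_right] at hp ⊢
    all_goals
      first
      | exact ⟨p, hp, Or.inr rfl⟩
      | (obtain rfl := Option.some.inj hp; exact ⟨_, rfl, Or.inr rfl⟩)
      | (obtain rfl := Option.some.inj hp; exact ⟨_, rfl, Or.inl hij⟩)
  | ofEq h' =>
    intro p ha hb hp
    exact ⟨p, by rw [← sep_teq h' ha hb]; exact hp, Or.inr rfl⟩
  | trans h1 h2 ih1 ih2 =>
    intro p ha hb hp
    obtain ⟨q, hq, hr⟩ := ih1 p ha hb hp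
    obtain ⟨q2, hq2, hr2⟩ := ih2 q (by rw [← cnt_red h1]; exact ha)
      (by rw [← cnt_red h1]; exact hb) hq
    refine ⟨q2, hq2, ?_⟩
    rcases hr with h | rfl
    · rcases hr2 with h' | rfl
      · exact Or.inl (h.trans h')
      · exact Or.inl h
    · exact hr2
  | congr i hl hr ihl ihr =>
    rename_i l l' r r'
    intro p ha hb hp
    simp only [cnt] at ha hb
    have el := cnt_red hl
    have er := cnt_red hr
    obtain ⟨h1, h2, h3, h4⟩ | ⟨h1, h2, h3, h4⟩ | ⟨h1, h2, h3, h4⟩ | ⟨h1, h2, h3, h4⟩ :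
        (cnt a l = 1 ∧ cnt a r = 0 ∧ cnt b l = 1 ∧ cnt b r = 0) ∨
        (cnt a l = 1 ∧ cnt a r = 0 ∧ cnt b l = 0 ∧ cnt b r = 1) ∨
        (cnt a l = 0 ∧ cnt a r = 1 ∧ cnt b l = 1 ∧ cnt b r = 0) ∨
        (cnt a l = 0 ∧ cnt a r = 1 ∧ cnt b l = 0 ∧ cnt b r = 1) := by omega
    · rw [sep_ten_left i h2 h4] at hp
      obtain ⟨q, hq, hrel⟩ := ihl p h1 h3 hp
      exact ⟨q, by rw [sep_ten_left i (by rw [← er]; omega) (by rw [← er]; omega)]; exact hq,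
        hrel⟩
    · rw [sep_ten_true i (by omega) (by omega)] at hp
      obtain rfl := Option.some.inj hp
      exact ⟨_, by rw [sep_ten_true i (by rw [← el]; omega) (by rw [← er]; omega)], Or.inr rfl⟩
    · rw [sep_ten_false i (by omega) (by omega) (by omega)] at hp
      obtain rfl := Option.some.inj hp
      exact ⟨_, by rw [sep_ten_false i (by rw [← el]; omega) (by rw [← er]; omega)
        (by rw [← el]; omega)], Or.inr rfl⟩
    · rw [sep_ten_right i h1 h3] at hp
      obtain ⟨q, hq, hrel⟩ := ihr p h2 h4 hp
      exact ⟨q, by rw [sep_ten_right i (by rw [← el]; omega) (by rw [← el]; omega)]; exact hq,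
        hrel⟩

end


/-- in the free n-fold monoidal category on a discrete category with two
distinct objects a, b, there is no object c admitting reductions a ⊗ₙ b → c and
b ⊗ₙ a → c (witnessing the non-joinability of the span of derived maps
ι^{in} : a ⊗ᵢ b → a ⊗ₙ b and τ^{in} : a ⊗ᵢ b → b ⊗ₙ a); consequently the rewriting
theory of n-fold monoidal categories is not confluent. -/
theorem stmt_17 (n : ℕ) (hn : 2 ≤ n) {V : Type*} (a b : V) (hab : a ≠ b) :
    (¬ ∃ c : ITerm n V,
        Red (.ten ⟨n - 1, by omega⟩ (.var a) (.var b)) c ∧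
        Red (.ten ⟨n - 1, by omega⟩ (.var b) (.var a)) c) ∧
    ¬ (∀ s u v : ITerm n V, Red s u → Red s v → ∃ w, Red u w ∧ Red v w) := by
  have hn0 : 0 < n := by omega
  set m : Fin n := ⟨n - 1, by omega⟩ with hm
  set z : Fin n := ⟨0, by omega⟩ with hz
  have hzm : z < m := by simp [hz, hm, Fin.lt_def]; omega
  have ca : cnt a (ITerm.var a : ITerm n V) = 1 := by simp [cnt]
  have cb : cnt b (ITerm.var b : ITerm n V) = 1 := by simp [cnt]
  have cab : cnt a (ITerm.var b : ITerm n V) = 0 := by simp [cnt, hab]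
  have cba : cnt b (ITerm.var a : ITerm n V) = 0 := by simp [cnt, Ne.symm hab]
  have sep1 : sep a b (ITerm.ten m (.var a) (.var b)) = some (m, true) :=
    sep_ten_true m (by omega) (by omega)
  have sep2 : sep a b (ITerm.ten m (.var b) (.var a)) = some (m, false) :=
    sep_ten_false m (by omega) (by omega) (by omega)
  have part1 : ¬ ∃ c : ITerm n V,
      Red (.ten m (.var a) (.var b)) c ∧ Red (.ten m (.var b) (.var a)) c := by
    rintro ⟨c, hc1, hc2⟩
    obtain ⟨q1, hq1, hr1⟩ := sep_red hc1 (m, true) (by simp [cnt, hab, Ne.symm hab]) (by simp [cnt, hab, Ne.symm hab])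
      sep1
    obtain ⟨q2, hq2, hr2⟩ := sep_red hc2 (m, false) (by simp [cnt, hab, Ne.symm hab]) (by simp [cnt, hab, Ne.symm hab])
      sep2
    have hq : q1 = q2 := by rw [hq1] at hq2; exact Option.some.inj hq2
    have l1 := q1.1.isLt
    have l2 := q2.1.isLt
    rcases hr1 with h1 | e1
    · simp only [hm] at h1; omega
    · rcases hr2 with h2 | e2
      · simp only [hm] at h2; omega
      · rw [← e1, ← e2] at hq
        simp at hq
  refine ⟨part1, fun H => ?_⟩
  have red1 : Red (ITerm.ten z (.var a) (.var b)) (ITerm.ten m (.var a) (.var b)) :=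
    Red.trans (Red.ofEq (TEq.congr z (TEq.symm (TEq.unit_right m (.var a)))
        (TEq.symm (TEq.unit_left m (.var b)))))
      (Red.trans (Red.eta z m hzm (.var a) .unit .unit (.var b))
        (Red.ofEq (TEq.congr m (TEq.unit_right z (.var a)) (TEq.unit_left z (.var b)))))
  have red2 : Red (ITerm.ten z (.var a) (.var b)) (ITerm.ten m (.var b) (.var a)) :=
    Red.trans (Red.ofEq (TEq.congr z (TEq.symm (TEq.unit_left m (.var a)))
        (TEq.symm (TEq.unit_right m (.var b)))))
      (Red.trans (Red.eta z m hzm .unit (.var a) (.var b) .unit)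
        (Red.ofEq (TEq.congr m (TEq.unit_left z (.var b)) (TEq.unit_right z (.var a)))))
  obtain ⟨w, hw1, hw2⟩ := H _ _ _ red1 red2
  exact part1 ⟨w, hw1, hw2⟩
end
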